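/- arXiv:1805.01461 — 3 statements merged into one kernel-verified Lean document; each statement's English description precedes it below -/
import Mathlib

section
/- Let A be a bounded right linear operator on a right quaternionic Hilbert space. Then the boundary of the S-spectrum of A is contained in the approximate S-point spectrum of A; in particular the approximate S-point spectrum is a nonempty closed subset of ℍ. -/
/-!
Through `ℂ ⊆ ℍ` acting on the right, `V` is a complex Banach space and every ℍ-linear operator
is ℂ-linear; `R_q(A)` becomes a quadratic polynomial in `A` depending continuously on `q`, with
unchanged invertibility, and `R_z(A) = (z - A)(z̄ - A)` for `z ∈ ℂ`.

An operator `T` on the boundary of the invertible operators is not bounded below: for an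
invertible `S` near `T`, non-invertibility of `T` forces `‖S⁻¹‖⁻¹ ≤ ‖T - S‖`, and `T` almost
annihilates a unit vector on which `S` is almost as small as `‖S⁻¹‖⁻¹`. Not being bounded below is
a closed condition, so `σ_ap^S(A)` is closed. Finally `σ_S(A)` contains the complex spectrum of `A`
(nonempty) and misses large reals, so its frontier is nonempty because `ℍ` is connected.
-/

notation "ℍ" => Quaternion ℝ

open MulOpposite Filter

variable {V : Type*} [NormedAddCommGroup V] [NormedSpace ℝ V] [Module ℍᵐᵒᵖ V]
  [IsBoundedSMul ℍᵐᵒᵖ V] [SMulCommClass ℍᵐᵒᵖ ℝ V] [IsScalarTower ℝ ℍᵐᵒᵖ V]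
  [CompleteSpace V]

/-- The pseudo-resolvent operator `R_q(A) = A² − 2 Re(q) A + |q|² I`. -/
noncomputable def pseudoRes (A : V →L[ℍᵐᵒᵖ] V) (q : ℍ) : V →L[ℍᵐᵒᵖ] V :=
  A.comp A - (2 * q.re) • A + (‖q‖ ^ 2 : ℝ) • ContinuousLinearMap.id ℍᵐᵒᵖ V

/-- The approximate S-point spectrum: quaternions `q` for which there is a sequence of
unit vectors `φ n` with `‖R_q(A) φ n‖ → 0`. -/
def apoSpec (A : V →L[ℍᵐᵒᵖ] V) : Set ℍ :=
  {q | ∃ φ : ℕ → V, (∀ n, ‖φ n‖ = 1) ∧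
    Tendsto (fun n => ‖pseudoRes A q (φ n)‖) atTop (nhds 0)}

/-- The S-spectrum: quaternions `q` for which `R_q(A)` is not invertible in `B(V)`. -/
def sSpec (A : V →L[ℍᵐᵒᵖ] V) : Set ℍ := {q | ¬IsUnit (pseudoRes A q)}

open Topology ComplexConjugate

section ApproxSingular

variable {𝕜 E F : Type*} [NormedAddCommGroup E] [NormedAddCommGroup F]

def IsApproxSingular (f : E → F) : Prop :=
  ∀ ε > 0, ∃ v, ‖v‖ = 1 ∧ ‖f v‖ < ε

theorem isApproxSingular_iff_exists_seq {f : E → F} :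
    IsApproxSingular f ↔
      ∃ φ : ℕ → E, (∀ n, ‖φ n‖ = 1) ∧ Tendsto (fun n => ‖f (φ n)‖) atTop (𝓝 0) := by
  constructor
  · intro h
    choose φ hφ hfφ using fun n : ℕ => h (1 / (n + 1)) Nat.one_div_pos_of_nat
    exact ⟨φ, hφ, squeeze_zero (fun _ => norm_nonneg _) (fun n => (hfφ n).le)
      tendsto_one_div_add_atTop_nhds_zero_nat⟩
  · rintro ⟨φ, hφ, hlim⟩ ε hε
    obtain ⟨n, hn⟩ := (hlim.eventually (gt_mem_nhds hε)).exists
    exact ⟨φ n, hφ n, hn⟩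

variable [NontriviallyNormedField 𝕜] [NormedSpace 𝕜 E] [NormedSpace 𝕜 F]

theorem ContinuousLinearMap.norm_apply_le_of_norm_eq_one (T : E →L[𝕜] F) {v : E}
    (hv : ‖v‖ = 1) : ‖T v‖ ≤ ‖T‖ := by
  simpa [hv] using T.le_opNorm v

theorem isClosed_setOf_isApproxSingular :
    IsClosed {T : E →L[𝕜] F | IsApproxSingular T} := by
  refine isClosed_of_closure_subset fun T hT ε hε => ?_
  obtain ⟨S, hS, hTS⟩ := Metric.mem_closure_iff.1 hT (ε / 2) (half_pos hε)
  obtain ⟨v, hv, hSv⟩ := hS (ε / 2) (half_pos hε)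
  refine ⟨v, hv, ?_⟩
  calc ‖T v‖ = ‖(T - S) v + S v‖ := by simp
    _ ≤ ‖T - S‖ + ‖S v‖ := norm_add_le_of_le ((T - S).norm_apply_le_of_norm_eq_one hv) le_rfl
    _ < ε / 2 + ε / 2 := add_lt_add (by rwa [← dist_eq_norm]) hSv
    _ = ε := add_halves ε

end ApproxSingular

section Units

variable {𝕜 E : Type*} [RCLike 𝕜] [NormedAddCommGroup E] [NormedSpace 𝕜 E] [Nontrivial E]

theorem ContinuousLinearMap.exists_norm_eq_one_norm_units_apply_le (S : (E →L[𝕜] E)ˣ) :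
    ∃ v, ‖v‖ = 1 ∧ ‖(S : E →L[𝕜] E) v‖ ≤ 2 * ‖(↑S⁻¹ : E →L[𝕜] E)‖⁻¹ := by
  set B : E →L[𝕜] E := ↑S⁻¹
  have hB : 0 < ‖B‖ := Units.norm_pos S⁻¹
  obtain ⟨w, hw, hBw⟩ := B.exists_lt_apply_of_lt_opNorm (half_lt_self hB)
  have hBw₀ : 0 < ‖B w‖ := (half_pos hB).trans hBw
  have hSBw : (S : E →L[𝕜] E) (B w) = w := congrArg (fun X : E →L[𝕜] E => X w) S.mul_inv
  refine ⟨(‖B w‖⁻¹ : 𝕜) • B w, norm_smul_inv_norm (norm_pos_iff.1 hBw₀), ?_⟩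
  rw [map_smul, hSBw, norm_smul, norm_inv, RCLike.norm_ofReal, abs_norm,
    inv_mul_le_iff₀ hBw₀]
  calc ‖w‖ ≤ 1 := hw.le
    _ = ‖B‖ / 2 * (2 * ‖B‖⁻¹) := by field_simp
    _ ≤ ‖B w‖ * (2 * ‖B‖⁻¹) := by gcongr

theorem isApproxSingular_of_mem_frontier_units [CompleteSpace E] {T : E →L[𝕜] E}
    (hT : T ∈ frontier {S : E →L[𝕜] E | IsUnit S}) : IsApproxSingular T := by
  rw [Units.isOpen.frontier_eq] at hT
  obtain ⟨hT, hTu⟩ := hT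
  intro ε hε
  obtain ⟨_, ⟨S, rfl⟩, hTS⟩ := Metric.mem_closure_iff.1 hT (ε / 3) (by positivity)
  rw [dist_eq_norm] at hTS
  have hS : ‖(↑S⁻¹ : E →L[𝕜] E)‖⁻¹ ≤ ‖T - S‖ :=
    not_lt.1 fun h => hTu (S.ofNearby T h).isUnit
  obtain ⟨v, hv, hSv⟩ := ContinuousLinearMap.exists_norm_eq_one_norm_units_apply_le S
  refine ⟨v, hv, ?_⟩
  calc ‖T v‖ = ‖(T - S) v + (S : E →L[𝕜] E) v‖ := by simp
    _ ≤ ‖T - S‖ + 2 * ‖T - S‖ :=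
      norm_add_le_of_le ((T - ↑S).norm_apply_le_of_norm_eq_one hv) (hSv.trans (by gcongr))
    _ < ε := by linarith

end Units

theorem Quaternion.norm_coeComplex (z : ℂ) : ‖(z : ℍ)‖ = ‖z‖ := by
  refine (pow_left_inj₀ (norm_nonneg _) (norm_nonneg _) two_ne_zero).1 ?_
  rw [sq, ← Quaternion.normSq_eq_norm_mul_self, Complex.sq_norm, Quaternion.normSq_def',
    Complex.normSq_apply]
  simp [sq]

noncomputable def complexToOpp : ℂ →ₐ[ℝ] ℍᵐᵒᵖ :=
  Quaternion.ofComplex.toOpposite fun x y => (Commute.all x y).map _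

theorem norm_complexToOpp (z : ℂ) : ‖complexToOpp z‖ = ‖z‖ := Quaternion.norm_coeComplex z

theorem smul_one_sub_mul_smul_one_sub {R A : Type*} [CommRing R] [Ring A] [Algebra R A]
    (a : A) (z w : R) : (z • 1 - a) * (w • 1 - a) = (z * w) • 1 - (z + w) • a + a * a := by
  simp only [sub_mul, mul_sub, smul_mul_assoc, mul_smul_comm, one_mul, mul_one]
  module

section ComplexStructure

variable {E : Type*} [NormedAddCommGroup E] [Module ℍᵐᵒᵖ E]

noncomputable abbrev complexModule : Module ℂ E :=
  Module.compHom E complexToOpp.toRingHom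

attribute [local instance] complexModule

theorem ofReal_smul [Module ℝ E] [IsScalarTower ℝ ℍᵐᵒᵖ E] (r : ℝ) (v : E) :
    (r : ℂ) • v = r • v := by
  change op (algebraMap ℝ ℍ r) • v = r • v
  rw [← MulOpposite.algebraMap_apply, algebraMap_smul]

noncomputable def restrictComplex : (E →L[ℍᵐᵒᵖ] E) →* (E →L[ℂ] E) where
  toFun B :=
    { toFun := B
      map_add' := B.map_add
      map_smul' := fun z => B.map_smul (op (z : ℍ))
      cont := B.cont }
  map_one' := rfl
  map_mul' _ _ := rfl

@[simp]
theorem restrictComplex_apply (B : E →L[ℍᵐᵒᵖ] E) (v : E) : restrictComplex B v = B v := rfl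

theorem isUnit_restrictComplex_iff {B : E →L[ℍᵐᵒᵖ] E} :
    IsUnit (restrictComplex B) ↔ IsUnit B := by
  refine ⟨fun ⟨u, hu⟩ => ?_, fun h => h.map restrictComplex⟩
  have hBC (v : E) : B ((↑u⁻¹ : E →L[ℂ] E) v) = v := by
    have := DFunLike.congr_fun u.mul_inv v
    rw [hu] at this
    exact this
  have hCB (v : E) : (↑u⁻¹ : E →L[ℂ] E) (B v) = v := by
    have := DFunLike.congr_fun u.inv_mul v
    rw [hu] at this
    exact this
  let C : E →L[ℍᵐᵒᵖ] E :=
    { toFun := (↑u⁻¹ : E →L[ℂ] E)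
      map_add' := map_add _
      map_smul' := fun h v => by
        conv_lhs => rw [← hBC v, ← B.map_smul, hCB]
        rfl
      cont := (↑u⁻¹ : E →L[ℂ] E).cont }
  exact ⟨⟨B, C, ContinuousLinearMap.ext hBC, ContinuousLinearMap.ext hCB⟩, rfl⟩

variable [NormedSpace ℝ E] [SMulCommClass ℍᵐᵒᵖ ℝ E]

theorem sSpec_eq_preimage (A : E →L[ℍᵐᵒᵖ] E) :
    sSpec A = (fun q => restrictComplex (pseudoRes A q)) ⁻¹' {S | IsUnit S}ᶜ := by
  ext q
  simp [sSpec, isUnit_restrictComplex_iff]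

theorem apoSpec_eq_preimage (A : E →L[ℍᵐᵒᵖ] E) :
    apoSpec A = (fun q => restrictComplex (pseudoRes A q)) ⁻¹' {T | IsApproxSingular T} := by
  ext q
  exact isApproxSingular_iff_exists_seq.symm

variable [IsBoundedSMul ℍᵐᵒᵖ E]

noncomputable abbrev complexNormedSpace : NormedSpace ℂ E where
  norm_smul_le z v := (norm_smul_le (complexToOpp z) v).trans_eq (by rw [norm_complexToOpp])

attribute [local instance] complexNormedSpace

variable [IsScalarTower ℝ ℍᵐᵒᵖ E]

theorem restrictComplex_pseudoRes (A : E →L[ℍᵐᵒᵖ] E) (q : ℍ) :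
    restrictComplex (pseudoRes A q) =
      restrictComplex A * restrictComplex A - ((2 * q.re : ℝ) : ℂ) • restrictComplex A +
        ((‖q‖ ^ 2 : ℝ) : ℂ) • 1 := by
  ext v
  rw [add_apply, sub_apply, smul_apply, smul_apply, ofReal_smul, ofReal_smul]
  rfl

theorem restrictComplex_pseudoRes_coeComplex (A : E →L[ℍᵐᵒᵖ] E) (z : ℂ) :
    restrictComplex (pseudoRes A z) =
      (z • 1 - restrictComplex A) * (conj z • 1 - restrictComplex A) := by
  have hre : ((2 * (z : ℍ).re : ℝ) : ℂ) = z + conj z := by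
    rw [Complex.add_conj, Quaternion.re_coeComplex]
  have hnorm : ((‖(z : ℍ)‖ ^ 2 : ℝ) : ℂ) = z * conj z := by
    rw [Complex.mul_conj, Quaternion.norm_coeComplex, Complex.normSq_eq_norm_sq]
  rw [restrictComplex_pseudoRes, hre, hnorm, smul_one_sub_mul_smul_one_sub]
  abel

theorem coeComplex_mem_sSpec_iff (A : E →L[ℍᵐᵒᵖ] E) (z : ℂ) :
    (z : ℍ) ∈ sSpec A ↔
      z ∈ spectrum ℂ (restrictComplex A) ∨ conj z ∈ spectrum ℂ (restrictComplex A) := by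
  have hcomm : Commute (z • 1 - restrictComplex A) (conj z • 1 - restrictComplex A) := by
    rw [Commute, SemiconjBy, smul_one_sub_mul_smul_one_sub, smul_one_sub_mul_smul_one_sub,
      mul_comm z, add_comm z]
  simp only [sSpec, Set.mem_ofPred_eq, ← isUnit_restrictComplex_iff,
    restrictComplex_pseudoRes_coeComplex, hcomm.isUnit_mul_iff, spectrum.mem_iff,
    Algebra.algebraMap_eq_smul_one, not_and_or]

theorem continuous_restrictComplex_pseudoRes (A : E →L[ℍᵐᵒᵖ] E) :
    Continuous fun q => restrictComplex (pseudoRes A q) := by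
  simp_rw [restrictComplex_pseudoRes]
  have := Quaternion.continuous_re
  fun_prop

theorem isClosed_apoSpec (A : E →L[ℍᵐᵒᵖ] E) : IsClosed (apoSpec A) := by
  rw [apoSpec_eq_preimage]
  exact isClosed_setOf_isApproxSingular.preimage (continuous_restrictComplex_pseudoRes A)

theorem frontier_sSpec_subset [CompleteSpace E] [Nontrivial E] (A : E →L[ℍᵐᵒᵖ] E) :
    frontier (sSpec A) ⊆ apoSpec A := by
  rw [sSpec_eq_preimage, apoSpec_eq_preimage]
  refine ((continuous_restrictComplex_pseudoRes A).frontier_preimage_subset _).trans ?_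
  rw [frontier_compl]
  exact fun _ => isApproxSingular_of_mem_frontier_units

theorem sSpec_nonempty [CompleteSpace E] [Nontrivial E] (A : E →L[ℍᵐᵒᵖ] E) :
    (sSpec A).Nonempty := by
  obtain ⟨z, hz⟩ := spectrum.nonempty (restrictComplex A)
  exact ⟨z, (coeComplex_mem_sSpec_iff A z).2 (Or.inl hz)⟩

theorem sSpec_ne_univ [CompleteSpace E] (A : E →L[ℍᵐᵒᵖ] E) : sSpec A ≠ Set.univ := by
  set r : ℝ := ‖restrictComplex A‖ * ‖(1 : E →L[ℂ] E)‖ + 1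
  have hr : (r : ℂ) ∉ spectrum ℂ (restrictComplex A) := fun h => by
    have := spectrum.norm_le_norm_mul_of_mem h
    rw [Complex.norm_real, Real.norm_eq_abs] at this
    linarith [le_abs_self r]
  refine fun h => hr ?_
  simpa [Complex.conj_ofReal] using (coeComplex_mem_sSpec_iff A r).1 (h ▸ Set.mem_univ _)

end ComplexStructure

theorem frontier_sSpec_subset_apoSpec [Nontrivial V] (A : V →L[ℍᵐᵒᵖ] V) :
    frontier (sSpec A) ⊆ apoSpec A ∧ (apoSpec A).Nonempty ∧ IsClosed (apoSpec A) :=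
  ⟨frontier_sSpec_subset A,
    (nonempty_frontier_iff.2 ⟨sSpec_nonempty A, sSpec_ne_univ A⟩).mono (frontier_sSpec_subset A),
    isClosed_apoSpec A⟩
end

section
/- Let A be a bounded right linear operator on a right quaternionic Hilbert space V and q ∈ ℍ. Then q is not in the approximate S-point spectrum of A if and only if ran(R_q̄(A†)) = V, where A† is the adjoint of A. -/
open MulOpposite Filter

variable {V : Type*} [NormedAddCommGroup V] [NormedSpace ℝ V] [Module ℍᵐᵒᵖ V]
  [IsBoundedSMul ℍᵐᵒᵖ V] [SMulCommClass ℍᵐᵒᵖ ℝ V] [IsScalarTower ℝ ℍᵐᵒᵖ V]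
  [CompleteSpace V]

/-!
Taking real parts of the quaternionic inner product makes `V` a real Hilbert space, in which
`R_q̄(B)` is the adjoint of `R_q(A)` because `R_q(A)` is a real polynomial in `A`. Not lying in
the approximate S-point spectrum means that `R_q(A)` is bounded below, and a bounded operator `T`
between real Hilbert spaces is bounded below iff `T†` is onto: if `T` is bounded below then
`T† T` is coercive, hence onto by Lax–Milgram; conversely the open mapping theorem gives
preimages `T† x = y` with `‖x‖ ≤ C ‖y‖`, and then `‖y‖² = ⟪x, T y⟫ ≤ C ‖y‖ ‖T y‖`.
-/

open Function ContinuousLinearMap InnerProductSpace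
open scoped InnerProduct NNReal Topology

theorem ContinuousLinearMap.exists_antilipschitzWith_iff_not_exists_unit_tendsto_zero
    {E F : Type*} [NormedAddCommGroup E] [NormedSpace ℝ E] [SeminormedAddCommGroup F]
    [NormedSpace ℝ F] (f : E →L[ℝ] F) :
    (∃ K, AntilipschitzWith K f) ↔
      ¬ ∃ φ : ℕ → E, (∀ n, ‖φ n‖ = 1) ∧ Tendsto (fun n => ‖f (φ n)‖) atTop (𝓝 0) := by
  constructor
  · rintro ⟨K, hK⟩ ⟨φ, hφ, hlim⟩
    have hbound : ∀ n, 1 ≤ K * ‖f (φ n)‖ := fun n => hφ n ▸ f.bound_of_antilipschitz hK (φ n)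
    have : (1 : ℝ) ≤ K * 0 := ge_of_tendsto' (hlim.const_mul _) hbound
    norm_num at this
  · intro h
    by_contra hK
    have hsmall : ∀ n : ℕ, ∃ x : E, (n + 1 : ℝ) * ‖f x‖ < ‖x‖ := by
      intro n
      by_contra! hn
      exact hK ⟨n + 1, f.antilipschitz_of_bound (by exact_mod_cast hn)⟩
    choose x hx using hsmall
    have hx0 : ∀ n, 0 < ‖x n‖ := fun n => lt_of_le_of_lt (by positivity) (hx n)
    refine h ⟨fun n => ‖x n‖⁻¹ • x n, fun n => norm_smul_inv_norm (norm_pos_iff.1 (hx0 n)), ?_⟩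
    refine squeeze_zero (fun n => norm_nonneg _) (fun n => ?_)
      tendsto_one_div_add_atTop_nhds_zero_nat
    rw [map_smul, norm_smul, norm_inv, norm_norm, inv_mul_le_iff₀ (hx0 n), mul_one_div,
      le_div_iff₀ (by positivity)]
    linarith [hx n]

section RealHilbert

variable {E F : Type*} [NormedAddCommGroup E] [InnerProductSpace ℝ E]
  [NormedAddCommGroup F] [InnerProductSpace ℝ F]

theorem AntilipschitzWith.isCoercive_innerSL_bilinearComp {T : E →L[ℝ] F} {K : ℝ≥0}
    (hT : AntilipschitzWith K T) : IsCoercive ((innerSL ℝ).bilinearComp T T) := by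
  refine ⟨((K : ℝ) + 1)⁻¹ ^ 2, by positivity, fun u => ?_⟩
  have hu : ((K : ℝ) + 1)⁻¹ * ‖u‖ ≤ ‖T u‖ := by
    rw [inv_mul_le_iff₀ (by positivity)]
    nlinarith [T.bound_of_antilipschitz hT u, norm_nonneg (T u)]
  have := mul_self_le_mul_self (by positivity) hu
  simp only [bilinearComp_apply, innerSL_apply_apply, real_inner_self_eq_norm_mul_norm]
  linarith

variable [CompleteSpace E] [CompleteSpace F]

theorem continuousLinearMapOfBilin_innerSL_bilinearComp (T : E →L[ℝ] F) :
    continuousLinearMapOfBilin ((innerSL ℝ).bilinearComp T T) = T† ∘L T :=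
  ext fun v => (unique_continuousLinearMapOfBilin _ fun w => adjoint_inner_left T w (T v)).symm

theorem ContinuousLinearMap.exists_antilipschitzWith_iff_surjective_adjoint (T : E →L[ℝ] F) :
    (∃ K, AntilipschitzWith K T) ↔ Surjective (T†) := by
  constructor
  · rintro ⟨K, hK⟩
    have := hK.isCoercive_innerSL_bilinearComp.range_eq_top
    rw [continuousLinearMapOfBilin_innerSL_bilinearComp, LinearMap.range_eq_top, coe_coe,
      coe_comp] at this
    exact this.of_comp
  · intro hsurj
    obtain ⟨C, hC, hpre⟩ := T†.exists_preimage_norm_le hsurj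
    refine ⟨C.toNNReal, T.antilipschitz_of_bound fun y => ?_⟩
    obtain ⟨x, hxy, hx⟩ := hpre y
    have hy : ‖y‖ * ‖y‖ ≤ ‖y‖ * (C * ‖T y‖) :=
      calc ‖y‖ * ‖y‖ = ⟪x, T y⟫_ℝ := by
            rw [← real_inner_self_eq_norm_mul_norm, ← hxy, adjoint_inner_left]
        _ ≤ ‖x‖ * ‖T y‖ := real_inner_le_norm x (T y)
        _ ≤ C * ‖y‖ * ‖T y‖ := by gcongr
        _ = ‖y‖ * (C * ‖T y‖) := by ring
    rw [Real.coe_toNNReal _ hC.le]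
    rcases (norm_nonneg y).eq_or_lt with hy0 | hy0
    · rw [← hy0]; positivity
    · exact le_of_mul_le_mul_left hy hy0

end RealHilbert

theorem Quaternion.op_coe_smul {E : Type*} [AddCommGroup E] [Module ℝ E] [Module ℍᵐᵒᵖ E]
    [IsScalarTower ℝ ℍᵐᵒᵖ E] (r : ℝ) (x : E) : op (r : ℍ) • x = r • x :=
  algebraMap_smul ℍᵐᵒᵖ r x

@[reducible] def InnerProductSpace.ofQuaternionicInner {E : Type*} [NormedAddCommGroup E]
    [NormedSpace ℝ E] [Module ℍᵐᵒᵖ E] [IsScalarTower ℝ ℍᵐᵒᵖ E] (inn : E → E → ℍ)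
    (hsymm : ∀ x y : E, inn x y = star (inn y x))
    (haddr : ∀ x y z : E, inn x (y + z) = inn x y + inn x z)
    (hsmulr : ∀ (x y : E) (p : ℍ), inn x (op p • y) = inn x y * p)
    (hnorm : ∀ x : E, inn x x = ((‖x‖ ^ 2 : ℝ) : ℍ)) : InnerProductSpace ℝ E where
  inner x y := (inn x y).re
  norm_sq_eq_re_inner x := by simp [hnorm, -Quaternion.coe_pow]
  conj_inner_symm x y := by simp [hsymm y x]
  add_left x y z := by simp only [hsymm _ z, haddr, star_add, Quaternion.re_add]
  smul_left x y r := by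
    simp [hsymm _ y, ← Quaternion.op_coe_smul, hsmulr, mul_comm]

omit [IsBoundedSMul ℍᵐᵒᵖ V] [CompleteSpace V] in
theorem restrictScalars_pseudoRes (A : V →L[ℍᵐᵒᵖ] V) (q : ℍ) :
    (pseudoRes A q).restrictScalars ℝ = A.restrictScalars ℝ ∘L A.restrictScalars ℝ -
      (2 * q.re) • A.restrictScalars ℝ + (‖q‖ ^ 2) • ContinuousLinearMap.id ℝ V :=
  rfl

omit [IsBoundedSMul ℍᵐᵒᵖ V] [CompleteSpace V] in
theorem not_mem_apoSpec_iff_exists_antilipschitzWith (A : V →L[ℍᵐᵒᵖ] V) (q : ℍ) :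
    q ∉ apoSpec A ↔ ∃ K, AntilipschitzWith K (pseudoRes A q) :=
  ((pseudoRes A q).restrictScalars ℝ).exists_antilipschitzWith_iff_not_exists_unit_tendsto_zero.symm

theorem not_mem_apoSpec_iff_adjoint_surjective (A B : V →L[ℍᵐᵒᵖ] V) (inn : V → V → ℍ)
    (hsymm : ∀ x y : V, inn x y = star (inn y x))
    (haddr : ∀ x y z : V, inn x (y + z) = inn x y + inn x z)
    (hsmulr : ∀ (x y : V) (p : ℍ), inn x (op p • y) = inn x y * p)
    (hnorm : ∀ x : V, inn x x = ((‖x‖ ^ 2 : ℝ) : ℍ))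
    (hadj : ∀ x y : V, inn x (A y) = inn (B x) y) (q : ℍ) :
    q ∉ apoSpec A ↔ LinearMap.range (pseudoRes B (star q) : V →ₗ[ℍᵐᵒᵖ] V) = ⊤ := by
  let := InnerProductSpace.ofQuaternionicInner inn hsymm haddr hsmulr hnorm
  have hB : B.restrictScalars ℝ = (A.restrictScalars ℝ)† :=
    (eq_adjoint_iff _ _).2 fun x y => congrArg QuaternionAlgebra.re (hadj x y).symm
  have hR : (pseudoRes B (star q)).restrictScalars ℝ = ((pseudoRes A q).restrictScalars ℝ)† := by
    simp [restrictScalars_pseudoRes, hB, adjoint_comp, adjoint_id]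
  rw [not_mem_apoSpec_iff_exists_antilipschitzWith, LinearMap.range_eq_top]
  exact ((pseudoRes A q).restrictScalars ℝ).exists_antilipschitzWith_iff_surjective_adjoint.trans
    (by rw [← hR]; rfl)
end

section
/- If K is a compact right linear operator on a right quaternionic Hilbert space V, then for every nonzero quaternion q, the right eigenspace ker(qI − K) is finite dimensional. -/
open MulOpposite Filter

variable {V : Type*} [NormedAddCommGroup V] [NormedSpace ℝ V] [Module ℍᵐᵒᵖ V]
  [IsBoundedSMul ℍᵐᵒᵖ V] [SMulCommClass ℍᵐᵒᵖ ℝ V] [IsScalarTower ℝ ℍᵐᵒᵖ V]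
  [CompleteSpace V]

open Set NNReal

theorem IsCompactOperator.finiteDimensional_of_antilipschitz (𝕜 : Type*)
    [NontriviallyNormedField 𝕜] [CompleteSpace 𝕜] {E F : Type*} [NormedAddCommGroup E]
    [Module 𝕜 E] [ContinuousSMul 𝕜 E] [PseudoMetricSpace F] {f : E → F} {c : ℝ≥0}
    (hf : IsCompactOperator f) (hfc : UniformContinuous f) (hfa : AntilipschitzWith c f) :
    FiniteDimensional 𝕜 E := by
  obtain ⟨U, hU, C, hC, hUC⟩ :=
    (isCompactOperator_iff_exists_mem_nhds_image_subset_compact f).mp hf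
  exact .of_totallyBounded_nhds_zero 𝕜 hU <|
    (totallyBounded_preimage (hfa.isUniformInducing hfc) hC.totallyBounded).subset
      (image_subset_iff.mp hUC)

theorem ContinuousLinearMap.finite_ker_sub_of_antilipschitz_of_isCompactOperator (𝕜 : Type*)
    [NontriviallyNormedField 𝕜] [CompleteSpace 𝕜] {R E : Type*} [Ring R] [SMul 𝕜 R]
    [NormedAddCommGroup E] [Module R E] [Module 𝕜 E] [ContinuousSMul 𝕜 E] [IsScalarTower 𝕜 R E]
    {A K : E →L[R] E} {c : ℝ≥0} (hA : AntilipschitzWith c A) (hK : IsCompactOperator K) :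
    Module.Finite R (LinearMap.ker ((A - K : E →L[R] E) : E →ₗ[R] E)) := by
  set p := LinearMap.ker ((A - K : E →L[R] E) : E →ₗ[R] E)
  have hKA : K ∘ p.subtypeL = (p : Set E).domRestrict A := by
    funext x
    exact (sub_eq_zero.mp x.2).symm
  have : ContinuousSMul 𝕜 p := ⟨.subtype_mk (by fun_prop) _⟩
  have : FiniteDimensional 𝕜 p := (hK.comp_clm p.subtypeL).finiteDimensional_of_antilipschitz 𝕜
    (K.uniformContinuous.comp uniformContinuous_subtype_val) (hKA ▸ hA.domRestrict p)
  exact Module.Finite.of_restrictScalars_finite 𝕜 R p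

/-- `Lq` models `qI`, left scalar multiplication by `q` induced by a fixed Hilbert basis. -/
theorem eigenspace_finiteDimensional_of_compact (K Lq : V →L[ℍᵐᵒᵖ] V) (q : ℍ) (hq : q ≠ 0)
    (hK : IsCompactOperator K) (hLq : ∀ φ : V, ‖Lq φ‖ = ‖q‖ * ‖φ‖) :
    FiniteDimensional ℍᵐᵒᵖ (LinearMap.ker ((Lq - K : V →L[ℍᵐᵒᵖ] V) : V →ₗ[ℍᵐᵒᵖ] V)) := by
  have hLq_anti : AntilipschitzWith ‖q‖₊⁻¹ Lq := Lq.antilipschitz_of_bound fun φ => by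
    rw [hLq, NNReal.coe_inv, coe_nnnorm, inv_mul_cancel_left₀ (norm_ne_zero_iff.mpr hq)]
  exact Lq.finite_ker_sub_of_antilipschitz_of_isCompactOperator ℝ hLq_anti hK
end
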